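/- Let σ be C², 2π-periodic. Define the Epstein map Ep(θ) = ((σ_θ² + e^{2σ} − 1)/(σ_θ² + (e^σ+1)²))·e^{iθ} + (2σ_θ/(σ_θ² + (e^σ+1)²))·i e^{iθ} and the normal Ñ(θ) = (2e^σ(σ_θ² − (e^σ+1)²)/(σ_θ² + (e^σ+1)²)²)·e^{iθ} + (4σ_θ e^σ(e^σ+1)/(σ_θ² + (e^σ+1)²)²)·i e^{iθ} (a tangent vector at Ep(θ) in the disk model). Then the derivative of Ep satisfies ∂_θ Ep(θ) = −i·Ñ(θ)·(e^{-σ}(σ_θθ − σ_θ²/2) + sinh(σ)), as an identity of complex-valued functions of θ (identifying tangent vectors with complex numbers). -/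

import Mathlib

open Complex

/-- The Epstein map of the metric `e^σ dθ` on the unit circle, in the Poincaré disk. -/
noncomputable def epsteinMap (σ : ℝ → ℝ) (θ : ℝ) : ℂ :=
  ((((deriv σ θ) ^ 2 + Real.exp (2 * σ θ) - 1)
      / ((deriv σ θ) ^ 2 + (Real.exp (σ θ) + 1) ^ 2) : ℝ) : ℂ) * Complex.exp (θ * I)
    + (((2 * deriv σ θ)
      / ((deriv σ θ) ^ 2 + (Real.exp (σ θ) + 1) ^ 2) : ℝ) : ℂ) * (I * Complex.exp (θ * I))

/-- The unit normal of the Epstein map, as a (Euclidean) tangent vector in the disk model. -/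
noncomputable def epsteinNormal (σ : ℝ → ℝ) (θ : ℝ) : ℂ :=
  (((2 * Real.exp (σ θ) * ((deriv σ θ) ^ 2 - (Real.exp (σ θ) + 1) ^ 2))
      / ((deriv σ θ) ^ 2 + (Real.exp (σ θ) + 1) ^ 2) ^ 2 : ℝ) : ℂ) * Complex.exp (θ * I)
    + (((4 * deriv σ θ * Real.exp (σ θ) * (Real.exp (σ θ) + 1))
      / ((deriv σ θ) ^ 2 + (Real.exp (σ θ) + 1) ^ 2) ^ 2 : ℝ) : ℂ)
        * (I * Complex.exp (θ * I))

/-! In the rotating frame `(e^{iθ}, i e^{iθ})` the Epstein map and its normal have real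
coordinates `(a, b)` and `(n₁, n₂)`, rational in `e^σ` and `σ_θ`. Since the frame turns with
unit speed, `Ep'` has coordinates `(a' - b, b' + a)`, and the theorem reduces to the two
rational identities `a' - b = n₂ k` and `b' + a = -n₁ k`, where
`k = e^{-σ}(σ_θθ - σ_θ²/2) + sinh σ`. -/

theorem hasDerivAt_ofReal_mul_cexp_add_ofReal_mul_I_mul_cexp {a b : ℝ → ℝ} {a' b' θ : ℝ}
    (ha : HasDerivAt a a' θ) (hb : HasDerivAt b b' θ) :
    HasDerivAt (fun x : ℝ => (a x : ℂ) * cexp (x * I) + (b x : ℂ) * (I * cexp (x * I)))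
      (((a' - b θ : ℝ) : ℂ) * cexp (θ * I) + ((b' + a θ : ℝ) : ℂ) * (I * cexp (θ * I)))
      θ := by
  have he : HasDerivAt (fun x : ℝ => cexp (x * I)) (I * cexp (θ * I)) θ := by
    simpa [mul_comm] using ((hasDerivAt_id θ).ofReal_comp.mul_const I).cexp
  refine ((ha.ofReal_comp.mul he).add (hb.ofReal_comp.mul (he.const_mul I))).congr_deriv ?_
  push_cast
  linear_combination (b θ : ℂ) * cexp (θ * I) * I_sq

namespace Epstein

noncomputable def denom (s p : ℝ) : ℝ := p ^ 2 + (Real.exp s + 1) ^ 2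

noncomputable def coordRe (s p : ℝ) : ℝ := (p ^ 2 + Real.exp (2 * s) - 1) / denom s p

noncomputable def coordIm (s p : ℝ) : ℝ := 2 * p / denom s p

noncomputable def normalRe (s p : ℝ) : ℝ :=
  2 * Real.exp s * (p ^ 2 - (Real.exp s + 1) ^ 2) / denom s p ^ 2

noncomputable def normalIm (s p : ℝ) : ℝ :=
  4 * p * Real.exp s * (Real.exp s + 1) / denom s p ^ 2

noncomputable def arcLengthDensity (s p q : ℝ) : ℝ :=
  Real.exp (-s) * (q - p ^ 2 / 2) + Real.sinh s

theorem epsteinMap_eq (σ : ℝ → ℝ) :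
    epsteinMap σ = fun x => (coordRe (σ x) (deriv σ x) : ℂ) * cexp (x * I)
      + (coordIm (σ x) (deriv σ x) : ℂ) * (I * cexp (x * I)) := rfl

theorem epsteinNormal_eq (σ : ℝ → ℝ) (θ : ℝ) :
    epsteinNormal σ θ = (normalRe (σ θ) (deriv σ θ) : ℂ) * cexp (θ * I)
      + (normalIm (σ θ) (deriv σ θ) : ℂ) * (I * cexp (θ * I)) := rfl

theorem arcLengthDensity_eq (σ : ℝ → ℝ) (θ : ℝ) :
    Real.exp (-σ θ) * (deriv (deriv σ) θ - deriv σ θ ^ 2 / 2) + Real.sinh (σ θ)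
      = arcLengthDensity (σ θ) (deriv σ θ) (deriv (deriv σ) θ) := rfl

theorem denom_pos (s p : ℝ) : 0 < denom s p := by
  unfold denom; positivity

variable {s p : ℝ → ℝ} {q θ : ℝ}

theorem hasDerivAt_denom (hs : HasDerivAt s (p θ) θ) (hp : HasDerivAt p q θ) :
    HasDerivAt (fun x => denom (s x) (p x))
      (2 * p θ * q + 2 * (Real.exp (s θ) + 1) * (Real.exp (s θ) * p θ)) θ := by
  refine ((hp.fun_pow 2).fun_add ((hs.exp.add_const 1).fun_pow 2)).congr_deriv ?_
  ring

theorem hasDerivAt_coordRe (hs : HasDerivAt s (p θ) θ) (hp : HasDerivAt p q θ) :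
    HasDerivAt (fun x => coordRe (s x) (p x))
      (coordIm (s θ) (p θ) + normalIm (s θ) (p θ) * arcLengthDensity (s θ) (p θ) q) θ := by
  have hnum : HasDerivAt (fun x => p x ^ 2 + Real.exp (2 * s x) - 1) _ θ :=
    ((hp.fun_pow 2).add (hs.const_mul 2).exp).sub_const 1
  refine (hnum.div (hasDerivAt_denom hs hp) (denom_pos _ _).ne').congr_deriv ?_
  have hD := (denom_pos (s θ) (p θ)).ne'
  simp only [coordIm, normalIm, arcLengthDensity, denom, Real.sinh_eq, Real.exp_neg] at hD ⊢
  rw [show 2 * s θ = s θ + s θ by ring, Real.exp_add]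
  field_simp
  ring

theorem hasDerivAt_coordIm (hs : HasDerivAt s (p θ) θ) (hp : HasDerivAt p q θ) :
    HasDerivAt (fun x => coordIm (s x) (p x))
      (-coordRe (s θ) (p θ) - normalRe (s θ) (p θ) * arcLengthDensity (s θ) (p θ) q) θ := by
  refine ((hp.const_mul 2).div (hasDerivAt_denom hs hp) (denom_pos _ _).ne').congr_deriv ?_
  have hD := (denom_pos (s θ) (p θ)).ne'
  simp only [coordRe, normalRe, arcLengthDensity, denom, Real.sinh_eq, Real.exp_neg] at hD ⊢
  rw [show 2 * s θ = s θ + s θ by ring, Real.exp_add]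
  field_simp
  ring

end Epstein

theorem epstein_tangent_general (σ : ℝ → ℝ) (hσ : ContDiff ℝ 2 σ) (θ : ℝ) :
    deriv (epsteinMap σ) θ
      = -I * epsteinNormal σ θ
          * ((Real.exp (-σ θ) * (deriv (deriv σ) θ - (deriv σ θ) ^ 2 / 2)
              + Real.sinh (σ θ) : ℝ) : ℂ) := by
  have hs : HasDerivAt σ (deriv σ θ) θ := (hσ.differentiable (by norm_num) θ).hasDerivAt
  have hp : HasDerivAt (deriv σ) (deriv (deriv σ) θ) θ :=
    ((hσ.iterate_deriv' 1 1).differentiable (by norm_num) θ).hasDerivAt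
  rw [Epstein.epsteinMap_eq, Epstein.epsteinNormal_eq, Epstein.arcLengthDensity_eq,
    (hasDerivAt_ofReal_mul_cexp_add_ofReal_mul_I_mul_cexp
      (Epstein.hasDerivAt_coordRe hs hp) (Epstein.hasDerivAt_coordIm hs hp)).deriv]
  set k := Epstein.arcLengthDensity (σ θ) (deriv σ θ) (deriv (deriv σ) θ)
  set n := Epstein.normalIm (σ θ) (deriv σ θ)
  push_cast
  linear_combination ((n : ℂ) * k * cexp (θ * I)) * I_sq

/-- The tangent of the Epstein curve:
`∂_θ Ep(θ) = −i·Ñ(θ)·(e^{−σ}(σ_θθ − σ_θ²/2) + sinh σ)`. -/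
theorem epstein_tangent (σ : ℝ → ℝ) (hσ : ContDiff ℝ 2 σ)
    (hper : Function.Periodic σ (2 * Real.pi)) (θ : ℝ) :
    deriv (epsteinMap σ) θ
      = -I * epsteinNormal σ θ
          * ((Real.exp (-σ θ) * (deriv (deriv σ) θ - (deriv σ θ) ^ 2 / 2)
              + Real.sinh (σ θ) : ℝ) : ℂ) :=
  epstein_tangent_general σ hσ θ
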